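/- arXiv:1410.0915 — 3 statements merged into one kernel-verified Lean document; each statement's English description precedes it below -/
import Mathlib

section
/- Let p < 1 with p ≠ 0, U(x) = x^p/p for x > 0, and V(y) = ((1−p)/p) y^{p/(p−1)} for y > 0. Let m ∈ ℝ, z > m, and y > 0. Then: (i) if y < (z−m)^{p−1}, the supremum of U(x+z) − x·y over x ∈ (−m, ∞) equals V(y) + y·z and is attained at x = y^{1/(p−1)} − z; (ii) if y ≥ (z−m)^{p−1}, the supremum of U(x+z) − x·y over x ∈ (−m, ∞) equals (z−m)^p/p + y·m. -/
/-!
`U(x) = x^p/p` is concave for `p ≤ 1`, so it lies below its tangent lines: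
`U(a) ≤ U(b) + b^(p-1) (a - b)` for `a, b > 0` (Bernoulli's inequality after scaling by `b`).
Hence `x ↦ U(x + z) - x y` is maximal where `(x + z)^(p-1) = y`, i.e. at `x = y^(1/(p-1)) - z`, when
that point is admissible. Otherwise `y ≥ U'(z - m)` and the same tangent line at `z - m` shows the
function is bounded by its value at the excluded endpoint `-m`, which is then the supremum by continuity.
-/

open Real Set

lemma one_add_mul_sub_one_le_rpow_of_nonpos {u p : ℝ} (hu : 0 < u) (hp : p ≤ 0) :
    1 + p * (u - 1) ≤ u ^ p := by
  have hlog : p * (u - 1) ≤ p * log u := mul_le_mul_of_nonpos_left (log_le_sub_one_of_pos hu) hp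
  calc 1 + p * (u - 1) ≤ p * log u + 1 := by linarith
    _ ≤ exp (p * log u) := add_one_le_exp _
    _ = u ^ p := by rw [rpow_def_of_pos hu, mul_comm]

lemma rpow_sub_one_div_le_sub_one {u p : ℝ} (hu : 0 < u) (hp : p ≤ 1) (hp0 : p ≠ 0) :
    (u ^ p - 1) / p ≤ u - 1 := by
  rcases hp0.lt_or_gt with hneg | hpos
  · rw [div_le_iff_of_neg hneg]
    linarith [one_add_mul_sub_one_le_rpow_of_nonpos hu hneg.le]
  · have h := rpow_one_add_le_one_add_mul_self (s := u - 1) (by linarith) hpos.le hp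
    rw [add_sub_cancel] at h
    rw [div_le_iff₀ hpos]
    linarith

lemma rpow_div_sub_rpow_div_le {p a b : ℝ} (hp : p ≤ 1) (hp0 : p ≠ 0) (ha : 0 < a) (hb : 0 < b) :
    a ^ p / p - b ^ p / p ≤ b ^ (p - 1) * (a - b) := by
  have hbp : 0 < b ^ p := rpow_pos_of_pos hb p
  calc a ^ p / p - b ^ p / p = b ^ p * (((a / b) ^ p - 1) / p) := by
        rw [div_rpow ha.le hb.le]; field_simp
    _ ≤ b ^ p * (a / b - 1) := by gcongr; exact rpow_sub_one_div_le_sub_one (div_pos ha hb) hp hp0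
    _ = b ^ (p - 1) * (a - b) := by rw [rpow_sub_one hb.ne']; field_simp

lemma rpow_one_div_sub_one_rpow_div_sub_mul_eq {p : ℝ} (hp0 : p ≠ 0) (hp1 : p ≠ 1) {y : ℝ}
    (hy : 0 < y) (z : ℝ) :
    (y ^ (1 / (p - 1))) ^ p / p - (y ^ (1 / (p - 1)) - z) * y
      = (1 - p) / p * y ^ (p / (p - 1)) + y * z := by
  have hp1' : p - 1 ≠ 0 := sub_ne_zero.2 hp1
  have hpow : (y ^ (1 / (p - 1))) ^ p = y ^ (p / (p - 1)) := by
    rw [← rpow_mul hy.le, one_div_mul_eq_div]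
  have hmul : y ^ (1 / (p - 1)) * y = y ^ (p / (p - 1)) := by
    rw [← rpow_add_one hy.ne']
    congr 1
    field_simp
    ring
  rw [hpow, sub_mul, hmul]
  field_simp
  ring

lemma rpow_add_div_sub_mul_le_conjugate {p : ℝ} (hp : p < 1) (hp0 : p ≠ 0) {x y z : ℝ}
    (hy : 0 < y) (hxz : 0 < x + z) :
    (x + z) ^ p / p - x * y ≤ (1 - p) / p * y ^ (p / (p - 1)) + y * z := by
  have hslope : (y ^ (1 / (p - 1))) ^ (p - 1) = y := by
    rw [← rpow_mul hy.le, one_div_mul_cancel (sub_ne_zero.2 hp.ne), rpow_one]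
  have htangent := rpow_div_sub_rpow_div_le hp.le hp0 hxz (rpow_pos_of_pos hy (1 / (p - 1)))
  rw [hslope] at htangent
  rw [← rpow_one_div_sub_one_rpow_div_sub_mul_eq hp0 hp.ne hy z]
  linarith

lemma rpow_add_div_sub_mul_le_of_le {p : ℝ} (hp : p ≤ 1) (hp0 : p ≠ 0) {m x y z : ℝ}
    (hzm : 0 < z - m) (hy : (z - m) ^ (p - 1) ≤ y) (hx : -m ≤ x) :
    (x + z) ^ p / p - x * y ≤ (z - m) ^ p / p + y * m := by
  have htangent := rpow_div_sub_rpow_div_le hp hp0 (by linarith : 0 < x + z) hzm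
  have hslope : (z - m) ^ (p - 1) * (x + m) ≤ y * (x + m) :=
    mul_le_mul_of_nonneg_right hy (by linarith)
  nlinarith

lemma isLUB_image_Ioi_of_continuousWithinAt {α β : Type*} [TopologicalSpace α] [LinearOrder α]
    [OrderTopology α] [DenselyOrdered α] [NoMaxOrder α] [TopologicalSpace β] [LinearOrder β]
    [OrderTopology β] {f : α → β} {a : α} (hf : ContinuousWithinAt f (Ioi a) a)
    (hle : ∀ x ∈ Ioi a, f x ≤ f a) : IsLUB (f '' Ioi a) (f a) :=
  isLUB_of_mem_closure (forall_mem_image.2 hle)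
    (hf.mem_closure_image (by rw [closure_Ioi]; exact mem_Ici.2 le_rfl))

/-- Constrained conjugate of power utility. For `p < 1`, `p ≠ 0`, `U(x) = x^p/p`,
`V(y) = ((1-p)/p) y^(p/(p-1))`, `m ∈ ℝ`, `z > m`, `y > 0`:
(i) if `y < (z-m)^(p-1)` then `sup_{x > -m} (U(x+z) - x y) = V(y) + y z`,
attained at `x = y^(1/(p-1)) - z`;
(ii) if `y ≥ (z-m)^(p-1)` then `sup_{x > -m} (U(x+z) - x y) = (z-m)^p/p + y m`. -/
theorem power_utility_constrained_conjugate (p m z y : ℝ)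
    (hp : p < 1) (hp0 : p ≠ 0) (hz : m < z) (hy : 0 < y) :
    (y < (z - m) ^ (p - 1) →
      IsGreatest ((fun x : ℝ => (x + z) ^ p / p - x * y) '' Set.Ioi (-m))
        ((1 - p) / p * y ^ (p / (p - 1)) + y * z) ∧
      y ^ (1 / (p - 1)) - z ∈ Set.Ioi (-m) ∧
      ((y ^ (1 / (p - 1)) - z) + z) ^ p / p - (y ^ (1 / (p - 1)) - z) * y
        = (1 - p) / p * y ^ (p / (p - 1)) + y * z) ∧
    ((z - m) ^ (p - 1) ≤ y →
      IsLUB ((fun x : ℝ => (x + z) ^ p / p - x * y) '' Set.Ioi (-m))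
        ((z - m) ^ p / p + y * m)) := by
  have hzm : 0 < z - m := sub_pos.2 hz
  refine ⟨fun hlt => ?_, fun hge => ?_⟩
  · have hmem : y ^ (1 / (p - 1)) - z ∈ Ioi (-m) := by
      have := (lt_rpow_inv_iff_of_neg hzm hy (sub_neg.2 hp)).2 hlt
      rw [← one_div] at this
      rw [mem_Ioi]
      linarith
    have hval : (y ^ (1 / (p - 1)) - z + z) ^ p / p - (y ^ (1 / (p - 1)) - z) * y
        = (1 - p) / p * y ^ (p / (p - 1)) + y * z := by
      rw [sub_add_cancel]; exact rpow_one_div_sub_one_rpow_div_sub_mul_eq hp0 hp.ne hy z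
    refine ⟨⟨⟨_, hmem, hval⟩, ?_⟩, hmem, hval⟩
    rintro _ ⟨x, hx, rfl⟩
    exact rpow_add_div_sub_mul_le_conjugate hp hp0 hy (by rw [mem_Ioi] at hx; linarith)
  · have hcont : ContinuousWithinAt (fun x : ℝ => (x + z) ^ p / p - x * y) (Ioi (-m)) (-m) :=
      ContinuousAt.continuousWithinAt <| by
        fun_prop (disch := exact Or.inl (by linarith))
    have hvalue : (-m + z) ^ p / p - -m * y = (z - m) ^ p / p + y * m := by
      rw [neg_add_eq_sub]; ring
    have hlub := isLUB_image_Ioi_of_continuousWithinAt hcont fun x hx => by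
      simpa only [hvalue] using rpow_add_div_sub_mul_le_of_le hp.le hp0 hzm hge (le_of_lt hx)
    rwa [hvalue] at hlub
end

section
/- Let (E, 𝒜, μ) be a finite measure space, d ≥ 1, and let ν, σ, σ_n : E → ℝ^d (n ∈ ℕ) be measurable with ∫ |ν|² dμ < ∞. Assume that σ_n → σ in μ-measure as n → ∞, that the inner product ⟨ν(e), σ(e)⟩ = 0 for μ-almost every e, and that σ(e) ≠ 0 for μ-almost every e. Then ∫ (⟨ν, σ_n⟩² / |σ_n|²) · 1_{{σ_n ≠ 0}} dμ → 0 as n → ∞. -/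
/-! Along a subsequence `σₙ → σ` almost everywhere, and wherever `σ ≠ 0` the map
`s ↦ ⟨ν, s⟩² / ‖s‖²` is continuous at `σ`, so the integrands tend a.e. to
`⟨ν, σ⟩² / ‖σ‖² = 0`. Cauchy–Schwarz dominates them by the integrable `‖ν‖²`, and dominated
convergence along subsequences of subsequences gives the limit. -/

open scoped Classical

open MeasureTheory Filter Topology

namespace MeasureTheory

theorem tendsto_integral_comp_of_tendstoInMeasure {α ι X G : Type*} [MeasurableSpace α]
    {μ : Measure α} [PseudoMetricSpace X] [NormedAddCommGroup G] [NormedSpace ℝ G]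
    {l : Filter ι} [l.IsCountablyGenerated] {f : ι → α → X} {g : α → X} {Φ : α → X → G}
    (bound : α → ℝ) (hΦ_meas : ∀ i, AEStronglyMeasurable (fun a => Φ a (f i a)) μ)
    (h_int : Integrable bound μ) (h_bound : ∀ i, ∀ᵐ a ∂μ, ‖Φ a (f i a)‖ ≤ bound a)
    (hΦ_cont : ∀ᵐ a ∂μ, ContinuousAt (Φ a) (g a)) (hfg : TendstoInMeasure μ f l g) :
    Tendsto (fun i => ∫ a, Φ a (f i a) ∂μ) l (𝓝 (∫ a, Φ a (g a) ∂μ)) := by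
  refine tendsto_of_subseq_tendsto fun ns hns => ?_
  obtain ⟨ms, -, hms⟩ := (hfg.comp hns).exists_seq_tendsto_ae
  refine ⟨ms, tendsto_integral_of_dominated_convergence bound (fun k => hΦ_meas _) h_int
    (fun k => h_bound _) ?_⟩
  filter_upwards [hms, hΦ_cont] with a ha hΦa
  exact hΦa.tendsto.comp ha

end MeasureTheory

section InnerProductSpace

variable {F : Type*} [NormedAddCommGroup F] [InnerProductSpace ℝ F]

theorem real_inner_sq_div_norm_sq_le (v s : F) : inner ℝ v s ^ 2 / ‖s‖ ^ 2 ≤ ‖v‖ ^ 2 := by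
  refine div_le_of_le_mul₀ (by positivity) (by positivity) ?_
  calc inner ℝ v s ^ 2 = |inner ℝ v s| ^ 2 := (sq_abs _).symm
    _ ≤ (‖v‖ * ‖s‖) ^ 2 := by gcongr; exact abs_real_inner_le_norm v s
    _ = ‖v‖ ^ 2 * ‖s‖ ^ 2 := mul_pow _ _ _

theorem continuousAt_real_inner_sq_div_norm_sq (v : F) {s : F} (hs : s ≠ 0) :
    ContinuousAt (fun s => inner ℝ v s ^ 2 / ‖s‖ ^ 2) s := by
  fun_prop (disch := positivity)

end InnerProductSpace

theorem kunita_watanabe_projection_vanishes_general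
    {E : Type*} [MeasurableSpace E] (μ : Measure E)
    (d : ℕ)
    (ν : E → EuclideanSpace ℝ (Fin d)) (σ : E → EuclideanSpace ℝ (Fin d))
    (σn : ℕ → E → EuclideanSpace ℝ (Fin d))
    (hν : Measurable ν) (hσn : ∀ n, Measurable (σn n))
    (hνint : Integrable (fun e => ‖ν e‖ ^ 2) μ)
    (hconv : TendstoInMeasure μ σn atTop σ)
    (horth : ∀ᵐ e ∂μ, (inner ℝ (ν e) (σ e) : ℝ) = 0)
    (hnondeg : ∀ᵐ e ∂μ, σ e ≠ 0) :
    Tendsto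
      (fun n => ∫ e,
        (if σn n e ≠ 0 then (inner ℝ (ν e) (σn n e) : ℝ) ^ 2 / ‖σn n e‖ ^ 2 else 0) ∂μ)
      atTop (nhds 0) := by
  -- The indicator is redundant: at `σₙ = 0` the quotient is already `0 / 0 = 0`.
  have h_ite (v s : EuclideanSpace ℝ (Fin d)) :
      (if s ≠ 0 then inner ℝ v s ^ 2 / ‖s‖ ^ 2 else 0) = inner ℝ v s ^ 2 / ‖s‖ ^ 2 := by
    split_ifs <;> simp_all
  have h_limit : ∫ e, inner ℝ (ν e) (σ e) ^ 2 / ‖σ e‖ ^ 2 ∂μ = 0 :=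
    integral_eq_zero_of_ae (by filter_upwards [horth] with e he; simp [he])
  have h_tendsto := tendsto_integral_comp_of_tendstoInMeasure (fun e => ‖ν e‖ ^ 2)
    (fun n => ((hν.inner (hσn n)).pow_const 2 |>.div
      ((hσn n).norm.pow_const 2)).aestronglyMeasurable)
    hνint
    (fun n => ae_of_all _ fun e => by
      rw [Real.norm_of_nonneg (by positivity)]
      exact real_inner_sq_div_norm_sq_le _ _)
    (hnondeg.mono fun e => continuousAt_real_inner_sq_div_norm_sq (ν e)) hconv
  simpa only [h_ite, h_limit] using h_tendsto

/-- Analytic core of the Kunita–Watanabe approximation lemma: if `σₙ → σ` in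
`μ`-measure, `⟨ν, σ⟩ = 0` a.e., `σ ≠ 0` a.e., and `‖ν‖²` is integrable over a
finite measure space, then `∫ ⟨ν, σₙ⟩²/‖σₙ‖² · 1_{σₙ ≠ 0} dμ → 0`. -/
theorem kunita_watanabe_projection_vanishes
    {E : Type*} [MeasurableSpace E] (μ : Measure E) [IsFiniteMeasure μ]
    (d : ℕ) (hd : 1 ≤ d)
    (ν : E → EuclideanSpace ℝ (Fin d)) (σ : E → EuclideanSpace ℝ (Fin d))
    (σn : ℕ → E → EuclideanSpace ℝ (Fin d))
    (hν : Measurable ν) (hσ : Measurable σ) (hσn : ∀ n, Measurable (σn n))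
    (hνint : Integrable (fun e => ‖ν e‖ ^ 2) μ)
    (hconv : TendstoInMeasure μ σn atTop σ)
    (horth : ∀ᵐ e ∂μ, (inner ℝ (ν e) (σ e) : ℝ) = 0)
    (hnondeg : ∀ᵐ e ∂μ, σ e ≠ 0) :
    Tendsto
      (fun n => ∫ e,
        (if σn n e ≠ 0 then (inner ℝ (ν e) (σn n e) : ℝ) ^ 2 / ‖σn n e‖ ^ 2 else 0) ∂μ)
      atTop (nhds 0) :=
  kunita_watanabe_projection_vanishes_general μ d ν σ σn hν hσn hνint hconv horth hnondeg
end

section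
/- Let (Ω, F, P) be a probability space with a filtration (ℱ_n)_{n∈ℕ}, let M = (M_n)_{n∈ℕ} be a martingale with respect to (ℱ_n) with M_n ≥ 0 almost surely for every n, and fix N ∈ ℕ. Suppose the function ω ↦ M_N(ω)·log(M_N(ω)) (with the convention 0·log 0 = 0) is integrable. Then c·(log c)·P( max_{0 ≤ n ≤ N} M_n ≥ c ) → 0 as the real parameter c → ∞. -/
open MeasureTheory Filter Real Topology

/-!
Doob's maximal inequality gives `c · P(M* ≥ c) ≤ E[M_N; M* ≥ c]`, so it suffices to show
`log c · E[M_N; M* ≥ c] → 0`. Split according to `M_N ≥ √c`. There `log c ≤ 2 log M_N`, so the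
contribution is at most `2 E[M_N log M_N; M_N ≥ √c]`, which tends to `0` by dominated convergence.
Elsewhere `log c · M_N ≤ √c log c`, and by Doob again
`√c log c · P(M* ≥ c) ≤ (log c / √c) · E[M_N] → 0`.
-/

theorem Finset.sup'_range_eq_ciSup_fin {α : Type*} [ConditionallyCompleteLattice α] (f : ℕ → α)
    (n : ℕ) : (range (n + 1)).sup' nonempty_range_add_one f = ⨆ k : Fin (n + 1), f k :=
  eq_of_forall_ge_iff fun a => by
    simp [ciSup_le_iff (Set.finite_range _).bddAbove, Fin.forall_iff]

noncomputable def mulLogAbove (t : ℝ) : ℝ → ℝ := (Set.Ici t).indicator fun y => y * log y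

theorem measurable_mulLogAbove (t : ℝ) : Measurable (mulLogAbove t) :=
  (measurable_id.mul measurable_log).indicator measurableSet_Ici

theorem norm_mulLogAbove_le (t y : ℝ) : ‖mulLogAbove t y‖ ≤ ‖y * log y‖ :=
  norm_indicator_le_norm_self _ _

theorem mulLogAbove_nonneg {t : ℝ} (ht : 1 ≤ t) (y : ℝ) : 0 ≤ mulLogAbove t y := by
  by_cases hy : t ≤ y
  · rw [mulLogAbove, Set.indicator_of_mem (Set.mem_Ici.2 hy)]
    exact mul_nonneg (by linarith) (log_nonneg (ht.trans hy))
  · rw [mulLogAbove, Set.indicator_of_notMem (mt Set.mem_Ici.1 hy)]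

theorem log_mul_le_two_mul_mulLogAbove_sqrt_add {c x : ℝ} (hc : 1 ≤ c) (hx : 0 ≤ x) :
    log c * x ≤ 2 * mulLogAbove √c x + √c * log c := by
  have hlogc : 0 ≤ log c := log_nonneg hc
  by_cases hcx : √c ≤ x
  · have hlog : log c ≤ 2 * log x := by
      have := log_le_log (sqrt_pos.2 (by linarith)) hcx
      rw [log_sqrt (by linarith)] at this
      linarith
    rw [mulLogAbove, Set.indicator_of_mem (Set.mem_Ici.2 hcx)]
    nlinarith [mul_nonneg (sqrt_nonneg c) hlogc]
  · rw [mulLogAbove, Set.indicator_of_notMem (mt Set.mem_Ici.1 hcx)]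
    nlinarith

section

variable {Ω : Type*} {m : MeasurableSpace Ω} {μ : Measure Ω}

theorem integrable_mulLogAbove {X : Ω → ℝ} (hX : AEMeasurable X μ)
    (hXlog : Integrable (fun ω => X ω * log (X ω)) μ) (t : ℝ) :
    Integrable (fun ω => mulLogAbove t (X ω)) μ :=
  hXlog.mono ((measurable_mulLogAbove t).comp_aemeasurable hX).aestronglyMeasurable
    (.of_forall fun ω => norm_mulLogAbove_le t (X ω))

theorem tendsto_integral_mulLogAbove_atTop {X : Ω → ℝ} (hX : AEMeasurable X μ)
    (hXlog : Integrable (fun ω => X ω * log (X ω)) μ) :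
    Tendsto (fun t => ∫ ω, mulLogAbove t (X ω) ∂μ) atTop (𝓝 0) := by
  have hlim : ∀ ω, Tendsto (fun t => mulLogAbove t (X ω)) atTop (𝓝 0) := fun ω =>
    tendsto_const_nhds.congr' <| (eventually_gt_atTop (X ω)).mono fun t ht =>
      (Set.indicator_of_notMem (not_le.2 ht : X ω ∉ Set.Ici t) _).symm
  simpa using tendsto_integral_filter_of_dominated_convergence _
    (.of_forall fun t => (integrable_mulLogAbove hX hXlog t).aestronglyMeasurable)
    (.of_forall fun t => .of_forall fun ω => norm_mulLogAbove_le t (X ω)) hXlog.norm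
    (.of_forall hlim)

theorem mul_log_mul_measureReal_le [IsFiniteMeasure μ] {X : Ω → ℝ} (hX0 : ∀ᵐ ω ∂μ, 0 ≤ X ω)
    (hX : Integrable X μ) (hXlog : Integrable (fun ω => X ω * log (X ω)) μ) {A : Set Ω} {c : ℝ}
    (hc : 1 ≤ c) (hA : c * μ.real A ≤ ∫ ω in A, X ω ∂μ) :
    c * log c * μ.real A ≤ 2 * ∫ ω, mulLogAbove √c (X ω) ∂μ + log c / √c * ∫ ω, X ω ∂μ := by
  have hlogc : 0 ≤ log c := log_nonneg hc
  have hsqrt : 0 < √c := sqrt_pos.2 (by linarith)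
  have hind := integrable_mulLogAbove hX.aemeasurable hXlog √c
  have hindA : ∫ ω in A, mulLogAbove √c (X ω) ∂μ ≤ ∫ ω, mulLogAbove √c (X ω) ∂μ :=
    setIntegral_le_integral hind (.of_forall fun ω => mulLogAbove_nonneg (one_le_sqrt.2 hc) _)
  have hsmall : √c * log c * μ.real A ≤ log c / √c * ∫ ω, X ω ∂μ :=
    calc √c * log c * μ.real A = log c / √c * (c * μ.real A) := by
          field_simp
          rw [sq_sqrt (by linarith)]
          ring
      _ ≤ log c / √c * ∫ ω, X ω ∂μ := by
          gcongr
          exact hA.trans (setIntegral_le_integral hX hX0)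
  calc c * log c * μ.real A = log c * (c * μ.real A) := by ring
    _ ≤ ∫ ω in A, log c * X ω ∂μ := by
        rw [integral_const_mul]; exact mul_le_mul_of_nonneg_left hA hlogc
    _ ≤ ∫ ω in A, (2 * mulLogAbove √c (X ω) + √c * log c) ∂μ :=
        integral_mono_ae (hX.integrableOn.const_mul _)
          ((hind.integrableOn.const_mul 2).add (integrable_const _))
          (ae_restrict_of_ae (hX0.mono fun ω hω => log_mul_le_two_mul_mulLogAbove_sqrt_add hc hω))
    _ = 2 * ∫ ω in A, mulLogAbove √c (X ω) ∂μ + √c * log c * μ.real A := by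
        rw [integral_add (hind.integrableOn.const_mul 2) (integrable_const _), integral_const_mul,
          setIntegral_const, smul_eq_mul, mul_comm (μ.real A)]
    _ ≤ _ := by gcongr

theorem tendsto_mul_log_mul_measureReal_of_le_setIntegral [IsFiniteMeasure μ] {X : Ω → ℝ}
    (hX0 : ∀ᵐ ω ∂μ, 0 ≤ X ω) (hX : Integrable X μ)
    (hXlog : Integrable (fun ω => X ω * log (X ω)) μ) {A : ℝ → Set Ω}
    (hA : ∀ᶠ c in atTop, c * μ.real (A c) ≤ ∫ ω in A c, X ω ∂μ) :
    Tendsto (fun c => c * log c * μ.real (A c)) atTop (𝓝 0) := by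
  have htail : Tendsto (fun c => ∫ ω, mulLogAbove √c (X ω) ∂μ) atTop (𝓝 0) :=
    (tendsto_integral_mulLogAbove_atTop hX.aemeasurable hXlog).comp tendsto_sqrt_atTop
  have hlog : Tendsto (fun c => log c / √c) atTop (𝓝 0) :=
    ((isLittleO_log_rpow_atTop one_half_pos).tendsto_div_nhds_zero).congr fun c => by
      rw [sqrt_eq_rpow]
  have hbound : Tendsto (fun c => 2 * ∫ ω, mulLogAbove √c (X ω) ∂μ + log c / √c * ∫ ω, X ω ∂μ)
      atTop (𝓝 0) := by
    simpa using (htail.const_mul 2).add (hlog.mul_const _)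
  refine tendsto_of_tendsto_of_tendsto_of_le_of_le' tendsto_const_nhds hbound ?_ ?_
  · filter_upwards [eventually_ge_atTop 1] with c hc
    exact mul_nonneg (mul_nonneg (by linarith) (log_nonneg hc)) measureReal_nonneg
  · filter_upwards [eventually_ge_atTop 1, hA] with c hc hcA
    exact mul_log_mul_measureReal_le hX0 hX hXlog hc hcA

namespace MeasureTheory.Submartingale

variable [IsFiniteMeasure μ] {ℱ : Filtration ℕ m} {f : ℕ → Ω → ℝ}

theorem mul_measureReal_le_setIntegral_sup' (hf : Submartingale f ℱ μ) (hnonneg : 0 ≤ f)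
    (n : ℕ) {c : ℝ} (hc : 0 ≤ c) :
    c * μ.real {ω | c ≤ (Finset.range (n + 1)).sup' Finset.nonempty_range_add_one fun k => f k ω}
      ≤ ∫ ω in {ω | c ≤ (Finset.range (n + 1)).sup' Finset.nonempty_range_add_one fun k => f k ω},
          f n ω ∂μ := by
  have h := ENNReal.toReal_mono (by simp) (maximal_ineq hf hnonneg (ε := c.toNNReal) n)
  rwa [Real.coe_toNNReal c hc, ENNReal.toReal_mul, ENNReal.toReal_ofReal
    (setIntegral_nonneg_of_ae (.of_forall fun ω => hnonneg n ω)), ENNReal.coe_toReal,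
    Real.coe_toNNReal c hc] at h

theorem mul_measureReal_le_setIntegral_iSup (hf : Submartingale f ℱ μ)
    (hnonneg : ∀ n, ∀ᵐ ω ∂μ, 0 ≤ f n ω) (n : ℕ) {c : ℝ} (hc : 0 ≤ c) :
    c * μ.real {ω | c ≤ ⨆ k : Fin (n + 1), f k ω}
      ≤ ∫ ω in {ω | c ≤ ⨆ k : Fin (n + 1), f k ω}, f n ω ∂μ := by
  have hpos : ∀ᵐ ω ∂μ, ∀ k, f⁺ k ω = f k ω :=
    ae_all_iff.2 fun k => (hnonneg k).mono fun ω hω => max_eq_left hω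
  have hset : {ω | c ≤ ⨆ k : Fin (n + 1), f k ω} =ᵐ[μ]
      {ω | c ≤ (Finset.range (n + 1)).sup' Finset.nonempty_range_add_one fun k => f⁺ k ω} := by
    filter_upwards [hpos] with ω hω
    change (c ≤ _) = (c ≤ _)
    simp only [Finset.sup'_range_eq_ciSup_fin, hω]
  rw [measureReal_congr hset, setIntegral_congr_set hset]
  calc _ ≤ ∫ ω in _, f⁺ n ω ∂μ :=
        hf.pos.mul_measureReal_le_setIntegral_sup' (fun k ω => le_sup_right) n hc
    _ = _ := integral_congr_ae (ae_restrict_of_ae (hpos.mono fun ω hω => hω n))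

end MeasureTheory.Submartingale

end

/-- `L log L` tail estimate for the running maximum of a nonnegative
martingale: if `M_N log M_N` is integrable, then
`c log c · P(max_{0 ≤ n ≤ N} M_n ≥ c) → 0` as `c → ∞`. -/
theorem LlogL_tail_running_max
    {Ω : Type*} [m : MeasurableSpace Ω] {P : Measure Ω} [IsProbabilityMeasure P]
    (ℱ : Filtration ℕ m) (M : ℕ → Ω → ℝ)
    (hM : Martingale M ℱ P)
    (hMnonneg : ∀ n, ∀ᵐ ω ∂P, 0 ≤ M n ω)
    (N : ℕ)
    (hint : Integrable (fun ω => M N ω * Real.log (M N ω)) P) :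
    Tendsto
      (fun c : ℝ =>
        c * Real.log c * (P {ω | c ≤ ⨆ n : Fin (N + 1), M n ω}).toReal)
      atTop (nhds 0) := by
  refine tendsto_mul_log_mul_measureReal_of_le_setIntegral (hMnonneg N) (hM.integrable N) hint ?_
  filter_upwards [eventually_ge_atTop 0] with c hc
  exact hM.submartingale.mul_measureReal_le_setIntegral_iSup hMnonneg N hc
end
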